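/- With x₁ = (√3/2, −1/2), x₂ = (0,1), x₃ = (−√3/2, −1/2) and F(a,b,r,s) = (c+(2π−s)²)|(a,b)−x₁| + (c+r²)|(a,b)−x₂| + (c+(s−r)²)|(a,b)−x₃|, the Hessian matrix of F at (0,0,2π/3,4π/3) equals the 4×4 matrix [[3c/2 + 2π²/3, 0, −2π/√3, 4π/√3], [0, 3c/2 + 2π²/3, −2π, 0], [−2π/√3, −2π, 4, −2], [4π/√3, 0, −2, 4]]. -/

import Mathlib

open Real

noncomputable def Fjunc (c : ℝ) (x : Fin 4 → ℝ) : ℝ :=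
  (c + (2*π - x 3)^2) * Real.sqrt ((x 0 - Real.sqrt 3 / 2)^2 + (x 1 + 1/2)^2)
  + (c + (x 2)^2) * Real.sqrt ((x 0)^2 + (x 1 - 1)^2)
  + (c + (x 3 - x 2)^2) * Real.sqrt ((x 0 + Real.sqrt 3 / 2)^2 + (x 1 + 1/2)^2)

noncomputable def hessMat (c : ℝ) : Matrix (Fin 4) (Fin 4) ℝ :=
  !![3*c/2 + 2*π^2/3, 0, -(2*π/Real.sqrt 3), 4*π/Real.sqrt 3;
     0, 3*c/2 + 2*π^2/3, -(2*π), 0;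
     -(2*π/Real.sqrt 3), -(2*π), 4, -2;
     4*π/Real.sqrt 3, 0, -2, 4]

noncomputable def Lmap (a : Fin 4 → ℝ) : (Fin 4 → ℝ) →L[ℝ] ℝ :=
  a 0 • ContinuousLinearMap.proj 0 + a 1 • ContinuousLinearMap.proj 1
  + a 2 • ContinuousLinearMap.proj 2 + a 3 • ContinuousLinearMap.proj 3

lemma Lmap_apply (a v : Fin 4 → ℝ) :
    Lmap a v = a 0 * v 0 + a 1 * v 1 + a 2 * v 2 + a 3 * v 3 := by
  simp [Lmap, smul_eq_mul]

lemma Lmap_single (a : Fin 4 → ℝ) (j : Fin 4) : Lmap a (Pi.single j 1) = a j := by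
  fin_cases j <;> simp [Lmap_apply, Pi.single_apply]

noncomputable def gradF (c : ℝ) (x : Fin 4 → ℝ) : Fin 4 → ℝ :=
  ![ (c + (2*π - x 3)^2) * (x 0 - Real.sqrt 3 / 2) / Real.sqrt ((x 0 - Real.sqrt 3 / 2)^2 + (x 1 + 1/2)^2)
      + (c + (x 2)^2) * (x 0) / Real.sqrt ((x 0)^2 + (x 1 - 1)^2)
      + (c + (x 3 - x 2)^2) * (x 0 + Real.sqrt 3 / 2) / Real.sqrt ((x 0 + Real.sqrt 3 / 2)^2 + (x 1 + 1/2)^2),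
     (c + (2*π - x 3)^2) * (x 1 + 1/2) / Real.sqrt ((x 0 - Real.sqrt 3 / 2)^2 + (x 1 + 1/2)^2)
      + (c + (x 2)^2) * (x 1 - 1) / Real.sqrt ((x 0)^2 + (x 1 - 1)^2)
      + (c + (x 3 - x 2)^2) * (x 1 + 1/2) / Real.sqrt ((x 0 + Real.sqrt 3 / 2)^2 + (x 1 + 1/2)^2),
     2 * x 2 * Real.sqrt ((x 0)^2 + (x 1 - 1)^2)
      - 2 * (x 3 - x 2) * Real.sqrt ((x 0 + Real.sqrt 3 / 2)^2 + (x 1 + 1/2)^2),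
     -(2 * (2*π - x 3)) * Real.sqrt ((x 0 - Real.sqrt 3 / 2)^2 + (x 1 + 1/2)^2)
      + 2 * (x 3 - x 2) * Real.sqrt ((x 0 + Real.sqrt 3 / 2)^2 + (x 1 + 1/2)^2) ]

lemma HasFDerivAt.sq {E : Type*} [NormedAddCommGroup E] [NormedSpace ℝ E]
    {f : E → ℝ} {f' : E →L[ℝ] ℝ} {x : E} (hf : HasFDerivAt f f' x) :
    HasFDerivAt (fun y => f y ^ 2) ((2 * f x) • f') x := by
  have h2 : (fun y => f y ^ 2) = fun y => f y * f y := by funext y; ring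
  rw [h2]
  refine (hf.mul hf).congr_fderiv ?_
  ext v
  simp [smul_eq_mul]
  ring

lemma HasFDerivAt.div'' {E : Type*} [NormedAddCommGroup E] [NormedSpace ℝ E]
    {A B : E → ℝ} {A' B' : E →L[ℝ] ℝ} {x : E} (hA : HasFDerivAt A A' x)
    (hB : HasFDerivAt B B' x) (hx : B x ≠ 0) :
    HasFDerivAt (fun y => A y / B y) ((1 / B x) • A' - (A x / B x ^ 2) • B') x := by
  have hinv : HasFDerivAt (fun y => (B y)⁻¹) ((-(B x ^ 2)⁻¹) • B') x :=
    (hasDerivAt_inv hx).comp_hasFDerivAt x hB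
  have H := hA.mul hinv
  refine (H.congr_fderiv ?_).congr_of_eventuallyEq ?_
  · ext v
    simp only [ContinuousLinearMap.add_apply, ContinuousLinearMap.smul_apply,
      ContinuousLinearMap.sub_apply, smul_eq_mul]
    field_simp
    ring
  · filter_upwards with y
    rw [div_eq_mul_inv]; rfl

lemma hasF (c : ℝ) (x : Fin 4 → ℝ)
    (h1 : (x 0 - Real.sqrt 3 / 2)^2 + (x 1 + 1/2)^2 ≠ 0)
    (h2 : (x 0)^2 + (x 1 - 1)^2 ≠ 0)
    (h3 : (x 0 + Real.sqrt 3 / 2)^2 + (x 1 + 1/2)^2 ≠ 0) :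
    HasFDerivAt (Fjunc c) (Lmap (gradF c x)) x := by
  have d0 := hasFDerivAt_apply (𝕜 := ℝ) 0 x
  have d1 := hasFDerivAt_apply (𝕜 := ℝ) 1 x
  have d2 := hasFDerivAt_apply (𝕜 := ℝ) 2 x
  have d3 := hasFDerivAt_apply (𝕜 := ℝ) 3 x
  have H := ((((d3.const_sub (2*π)).sq).const_add c).mul
      ((((d0.sub_const (Real.sqrt 3 / 2)).sq).add ((d1.add_const (1/2)).sq)).sqrt h1)).add
    ((((d2.sq).const_add c).mul (((d0.sq).add ((d1.sub_const 1).sq)).sqrt h2)).add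
     ((((d3.sub d2).sq).const_add c).mul
      ((((d0.add_const (Real.sqrt 3 / 2)).sq).add ((d1.add_const (1/2)).sq)).sqrt h3)))
  refine (H.congr_fderiv ?_).congr_of_eventuallyEq ?_
  · refine ContinuousLinearMap.ext fun v => ?_
    simp only [Lmap_apply, gradF, Matrix.cons_val_zero, Matrix.cons_val_one, Matrix.head_cons,
      Matrix.cons_val_two, Matrix.tail_cons, Matrix.cons_val_three,
      ContinuousLinearMap.add_apply, ContinuousLinearMap.smul_apply,
      ContinuousLinearMap.proj_apply, ContinuousLinearMap.neg_apply,
      ContinuousLinearMap.sub_apply, smul_eq_mul, Pi.add_apply, Pi.sub_apply, Pi.mul_apply, pow_one]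
    ring
  · filter_upwards with y
    simp only [Fjunc, Pi.add_apply, Pi.mul_apply, Pi.sub_apply]
    ring

noncomputable def pt : Fin 4 → ℝ := ![0, 0, 2*π/3, 4*π/3]

lemma pt0 : pt 0 = 0 := by simp [pt]
lemma pt1 : pt 1 = 0 := by simp [pt]
lemma pt2 : pt 2 = 2*π/3 := by simp [pt]
lemma pt3 : pt 3 = 4*π/3 := by simp [pt]

lemma sqrt3_sq : Real.sqrt 3 ^ 2 = 3 := Real.sq_sqrt (by norm_num)

lemma q1pt : (pt 0 - Real.sqrt 3 / 2)^2 + (pt 1 + 1/2)^2 = 1 := by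
  rw [pt0, pt1]; nlinarith [sqrt3_sq]

lemma q2pt : (pt 0)^2 + (pt 1 - 1)^2 = 1 := by
  rw [pt0, pt1]; norm_num

lemma q3pt : (pt 0 + Real.sqrt 3 / 2)^2 + (pt 1 + 1/2)^2 = 1 := by
  rw [pt0, pt1]; nlinarith [sqrt3_sq]

lemma s1pt : Real.sqrt ((pt 0 - Real.sqrt 3 / 2)^2 + (pt 1 + 1/2)^2) = 1 := by
  rw [q1pt, Real.sqrt_one]
lemma s2pt : Real.sqrt ((pt 0)^2 + (pt 1 - 1)^2) = 1 := by
  rw [q2pt, Real.sqrt_one]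
lemma s3pt : Real.sqrt ((pt 0 + Real.sqrt 3 / 2)^2 + (pt 1 + 1/2)^2) = 1 := by
  rw [q3pt, Real.sqrt_one]

lemma r1 : 2*π/Real.sqrt 3 = 2*Real.sqrt 3*π/3 := by
  have h3 : Real.sqrt 3 ≠ 0 := by positivity
  field_simp
  linear_combination (-1)*sqrt3_sq

lemma r2 : 4*π/Real.sqrt 3 = 4*Real.sqrt 3*π/3 := by
  have h3 : Real.sqrt 3 ≠ 0 := by positivity
  field_simp
  linear_combination (-1)*sqrt3_sq

lemma fd_event (c : ℝ) (j : Fin 4) :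
    (fun x => fderiv ℝ (Fjunc c) x (Pi.single j 1)) =ᶠ[nhds pt] (fun x => gradF c x j) := by
  have c1 : ContinuousAt (fun x : Fin 4 → ℝ => (x 0 - Real.sqrt 3 / 2)^2 + (x 1 + 1/2)^2) pt := by
    fun_prop
  have c2 : ContinuousAt (fun x : Fin 4 → ℝ => (x 0)^2 + (x 1 - 1)^2) pt := by fun_prop
  have c3 : ContinuousAt (fun x : Fin 4 → ℝ => (x 0 + Real.sqrt 3 / 2)^2 + (x 1 + 1/2)^2) pt := by
    fun_prop
  have e1 := c1.eventually_ne (y := 0) (by show ((pt 0 - Real.sqrt 3 / 2)^2 + (pt 1 + 1/2)^2) ≠ 0; rw [q1pt]; norm_num)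
  have e2 := c2.eventually_ne (y := 0) (by show ((pt 0)^2 + (pt 1 - 1)^2) ≠ 0; rw [q2pt]; norm_num)
  have e3 := c3.eventually_ne (y := 0) (by show ((pt 0 + Real.sqrt 3 / 2)^2 + (pt 1 + 1/2)^2) ≠ 0; rw [q3pt]; norm_num)
  filter_upwards [e1, e2, e3] with x h1 h2 h3
  rw [(hasF c x h1 h2 h3).fderiv, Lmap_single]

lemma hasD2 (c : ℝ) : HasFDerivAt (fun x => gradF c x 2)
    (Lmap ![-(2*π/Real.sqrt 3), -(2*π), 4, -2]) pt := by
  have d0 := hasFDerivAt_apply (𝕜 := ℝ) 0 pt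
  have d1 := hasFDerivAt_apply (𝕜 := ℝ) 1 pt
  have d2 := hasFDerivAt_apply (𝕜 := ℝ) 2 pt
  have d3 := hasFDerivAt_apply (𝕜 := ℝ) 3 pt
  have hs2 := ((d0.sq).add ((d1.sub_const 1).sq)).sqrt (by simp only [Pi.add_apply]; rw [q2pt]; norm_num)
  have hs3 := (((d0.add_const (Real.sqrt 3 / 2)).sq).add ((d1.add_const (1/2)).sq)).sqrt
    (by simp only [Pi.add_apply]; rw [q3pt]; norm_num)
  have H := ((d2.const_mul 2).mul hs2).sub (((d3.sub d2).const_mul 2).mul hs3)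
  refine (H.congr_fderiv ?_).congr_of_eventuallyEq ?_
  · refine ContinuousLinearMap.ext fun v => ?_
    simp only [Lmap_apply, Matrix.cons_val_zero, Matrix.cons_val_one, Matrix.head_cons,
      Matrix.cons_val_two, Matrix.tail_cons, Matrix.cons_val_three,
      ContinuousLinearMap.add_apply, ContinuousLinearMap.smul_apply,
      ContinuousLinearMap.proj_apply, ContinuousLinearMap.neg_apply,
      ContinuousLinearMap.sub_apply, smul_eq_mul, Pi.add_apply, Pi.sub_apply, Pi.mul_apply]
    rw [r1, s2pt, s3pt, pt0, pt1, pt2, pt3]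
    ring
  · filter_upwards with y
    simp [gradF]

lemma hasD3 (c : ℝ) : HasFDerivAt (fun x => gradF c x 3)
    (Lmap ![4*π/Real.sqrt 3, 0, -2, 4]) pt := by
  have d0 := hasFDerivAt_apply (𝕜 := ℝ) 0 pt
  have d1 := hasFDerivAt_apply (𝕜 := ℝ) 1 pt
  have d2 := hasFDerivAt_apply (𝕜 := ℝ) 2 pt
  have d3 := hasFDerivAt_apply (𝕜 := ℝ) 3 pt
  have hs1 := (((d0.sub_const (Real.sqrt 3 / 2)).sq).add ((d1.add_const (1/2)).sq)).sqrt
    (by simp only [Pi.add_apply]; rw [q1pt]; norm_num)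
  have hs3 := (((d0.add_const (Real.sqrt 3 / 2)).sq).add ((d1.add_const (1/2)).sq)).sqrt
    (by simp only [Pi.add_apply]; rw [q3pt]; norm_num)
  have H := ((((d3.const_sub (2*π)).const_mul 2).neg).mul hs1).add
    (((d3.sub d2).const_mul 2).mul hs3)
  refine (H.congr_fderiv ?_).congr_of_eventuallyEq ?_
  · refine ContinuousLinearMap.ext fun v => ?_
    simp only [Lmap_apply, Matrix.cons_val_zero, Matrix.cons_val_one, Matrix.head_cons,
      Matrix.cons_val_two, Matrix.tail_cons, Matrix.cons_val_three,
      ContinuousLinearMap.add_apply, ContinuousLinearMap.smul_apply,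
      ContinuousLinearMap.proj_apply, ContinuousLinearMap.neg_apply,
      ContinuousLinearMap.sub_apply, smul_eq_mul, Pi.add_apply, Pi.sub_apply, Pi.mul_apply, Pi.neg_apply]
    rw [r2, s1pt, s3pt, pt0, pt1, pt2, pt3]
    ring
  · filter_upwards with y
    simp [gradF]

lemma hasD0 (c : ℝ) : HasFDerivAt (fun x => gradF c x 0)
    (Lmap ![3*c/2 + 2*π^2/3, 0, -(2*π/Real.sqrt 3), 4*π/Real.sqrt 3]) pt := by
  have d0 := hasFDerivAt_apply (𝕜 := ℝ) 0 pt
  have d1 := hasFDerivAt_apply (𝕜 := ℝ) 1 pt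
  have d2 := hasFDerivAt_apply (𝕜 := ℝ) 2 pt
  have d3 := hasFDerivAt_apply (𝕜 := ℝ) 3 pt
  have hs1 := (((d0.sub_const (Real.sqrt 3 / 2)).sq).add ((d1.add_const (1/2)).sq)).sqrt
    (by simp only [Pi.add_apply]; rw [q1pt]; norm_num)
  have hs2 := ((d0.sq).add ((d1.sub_const 1).sq)).sqrt (by simp only [Pi.add_apply]; rw [q2pt]; norm_num)
  have hs3 := (((d0.add_const (Real.sqrt 3 / 2)).sq).add ((d1.add_const (1/2)).sq)).sqrt
    (by simp only [Pi.add_apply]; rw [q3pt]; norm_num)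
  have hn1 : Real.sqrt ((pt 0 - Real.sqrt 3 / 2)^2 + (pt 1 + 1/2)^2) ≠ 0 := by
    rw [s1pt]; norm_num
  have hn2 : Real.sqrt ((pt 0)^2 + (pt 1 - 1)^2) ≠ 0 := by rw [s2pt]; norm_num
  have hn3 : Real.sqrt ((pt 0 + Real.sqrt 3 / 2)^2 + (pt 1 + 1/2)^2) ≠ 0 := by
    rw [s3pt]; norm_num
  have t1 := ((((d3.const_sub (2*π)).sq).const_add c).mul
    (d0.sub_const (Real.sqrt 3 / 2))).div'' hs1 hn1
  have t2 := (((d2.sq).const_add c).mul d0).div'' hs2 hn2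
  have t3 := ((((d3.sub d2).sq).const_add c).mul (d0.add_const (Real.sqrt 3 / 2))).div'' hs3 hn3
  have H := (t1.add t2).add t3
  refine (H.congr_fderiv ?_).congr_of_eventuallyEq ?_
  · refine ContinuousLinearMap.ext fun v => ?_
    simp only [Lmap_apply, Matrix.cons_val_zero, Matrix.cons_val_one, Matrix.head_cons,
      Matrix.cons_val_two, Matrix.tail_cons, Matrix.cons_val_three,
      ContinuousLinearMap.add_apply, ContinuousLinearMap.smul_apply,
      ContinuousLinearMap.proj_apply, ContinuousLinearMap.neg_apply,
      ContinuousLinearMap.sub_apply, smul_eq_mul, Pi.add_apply, Pi.sub_apply, Pi.mul_apply]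
    rw [r1, r2, s1pt, s2pt, s3pt, pt0, pt1, pt2, pt3]
    linear_combination (-(c * v 0 / 2 + 2 * π^2 * v 0 / 9)) * sqrt3_sq
  · filter_upwards with y
    simp [gradF]

lemma hasD1 (c : ℝ) : HasFDerivAt (fun x => gradF c x 1)
    (Lmap ![0, 3*c/2 + 2*π^2/3, -(2*π), 0]) pt := by
  have d0 := hasFDerivAt_apply (𝕜 := ℝ) 0 pt
  have d1 := hasFDerivAt_apply (𝕜 := ℝ) 1 pt
  have d2 := hasFDerivAt_apply (𝕜 := ℝ) 2 pt
  have d3 := hasFDerivAt_apply (𝕜 := ℝ) 3 pt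
  have hs1 := (((d0.sub_const (Real.sqrt 3 / 2)).sq).add ((d1.add_const (1/2)).sq)).sqrt
    (by simp only [Pi.add_apply]; rw [q1pt]; norm_num)
  have hs2 := ((d0.sq).add ((d1.sub_const 1).sq)).sqrt (by simp only [Pi.add_apply]; rw [q2pt]; norm_num)
  have hs3 := (((d0.add_const (Real.sqrt 3 / 2)).sq).add ((d1.add_const (1/2)).sq)).sqrt
    (by simp only [Pi.add_apply]; rw [q3pt]; norm_num)
  have hn1 : Real.sqrt ((pt 0 - Real.sqrt 3 / 2)^2 + (pt 1 + 1/2)^2) ≠ 0 := by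
    rw [s1pt]; norm_num
  have hn2 : Real.sqrt ((pt 0)^2 + (pt 1 - 1)^2) ≠ 0 := by rw [s2pt]; norm_num
  have hn3 : Real.sqrt ((pt 0 + Real.sqrt 3 / 2)^2 + (pt 1 + 1/2)^2) ≠ 0 := by
    rw [s3pt]; norm_num
  have t1 := ((((d3.const_sub (2*π)).sq).const_add c).mul
    (d1.add_const (1/2))).div'' hs1 hn1
  have t2 := (((d2.sq).const_add c).mul (d1.sub_const 1)).div'' hs2 hn2
  have t3 := ((((d3.sub d2).sq).const_add c).mul (d1.add_const (1/2))).div'' hs3 hn3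
  have H := (t1.add t2).add t3
  refine (H.congr_fderiv ?_).congr_of_eventuallyEq ?_
  · refine ContinuousLinearMap.ext fun v => ?_
    simp only [Lmap_apply, Matrix.cons_val_zero, Matrix.cons_val_one, Matrix.head_cons,
      Matrix.cons_val_two, Matrix.tail_cons, Matrix.cons_val_three,
      ContinuousLinearMap.add_apply, ContinuousLinearMap.smul_apply,
      ContinuousLinearMap.proj_apply, ContinuousLinearMap.neg_apply,
      ContinuousLinearMap.sub_apply, smul_eq_mul, Pi.add_apply, Pi.sub_apply, Pi.mul_apply]
    rw [s1pt, s2pt, s3pt, pt0, pt1, pt2, pt3]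
    ring
  · filter_upwards with y
    simp [gradF]

theorem stmt_7 (c : ℝ) (hc : 0 < c) :
    ∀ i j : Fin 4,
      fderiv ℝ (fun x => fderiv ℝ (Fjunc c) x (Pi.single j 1))
        (![0, 0, 2*π/3, 4*π/3]) (Pi.single i 1) = hessMat c i j := by
  intro i j
  have hpt : (![0, 0, 2*π/3, 4*π/3] : Fin 4 → ℝ) = pt := rfl
  rw [hpt, (fd_event c j).fderiv_eq]
  fin_cases j
  · show fderiv ℝ (fun x => gradF c x 0) pt (Pi.single i 1) = hessMat c i 0
    rw [(hasD0 c).fderiv, Lmap_single]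
    fin_cases i <;> simp [hessMat]
  · show fderiv ℝ (fun x => gradF c x 1) pt (Pi.single i 1) = hessMat c i 1
    rw [(hasD1 c).fderiv, Lmap_single]
    fin_cases i <;> simp [hessMat]
  · show fderiv ℝ (fun x => gradF c x 2) pt (Pi.single i 1) = hessMat c i 2
    rw [(hasD2 c).fderiv, Lmap_single]
    fin_cases i <;> simp [hessMat]
  · show fderiv ℝ (fun x => gradF c x 3) pt (Pi.single i 1) = hessMat c i 3
    rw [(hasD3 c).fderiv, Lmap_single]
    fin_cases i <;> simp [hessMat]
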